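/- arXiv:1908.11744 — 2 statements merged into one kernel-verified Lean document; each statement's English description precedes it below -/
import Mathlib

section
/- Let (B,+,∘,λ) be a brace-like left semi-truss with multiplicative identity 1, and let P = {a + b : a, b ∈ B}. Then the set D = (B \ P) ∪ {1} is a subgroup of the group (B,∘); in particular, for all a, b ∈ D one has ā ∘ b ∈ D. -/
/-! Left multiplication maps sums to sums, since `c ∘ (u + v) = (c ∘ u) + λ_c(v)`; as `(B, ∘)` is a
group, `x` is a sum exactly when `c ∘ x` is. So if `ā ∘ b` is a sum, so is `b`, forcing `b = 1`;
then `1` is a sum, hence so is every `x = x ∘ 1`, forcing `a = 1` as well. -/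

def sumSet {B : Type*} (add : B → B → B) : Set B := {x | ∃ u v : B, add u v = x}

section

variable {B : Type*} {add mul : B → B → B} {one : B} {inv : B → B} {lam : B → B → B}

theorem mul_mem_sumSet (dist : ∀ a b c : B, mul a (add b c) = add (mul a b) (lam a c))
    (c : B) {x : B} (hx : x ∈ sumSet add) : mul c x ∈ sumSet add := by
  obtain ⟨u, v, rfl⟩ := hx
  exact ⟨mul c u, lam c v, (dist c u v).symm⟩

theorem mem_sumSet_of_inv_mul_mem (mul_assoc : ∀ a b c : B, mul (mul a b) c = mul a (mul b c))
    (one_mul : ∀ a : B, mul one a = a) (mul_inv : ∀ a : B, mul a (inv a) = one)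
    (dist : ∀ a b c : B, mul a (add b c) = add (mul a b) (lam a c))
    {a x : B} (h : mul (inv a) x ∈ sumSet add) : x ∈ sumSet add := by
  simpa only [← mul_assoc, mul_inv, one_mul] using mul_mem_sumSet dist a h

theorem sumSet_eq_univ_of_one_mem (mul_one : ∀ a : B, mul a one = a)
    (dist : ∀ a b c : B, mul a (add b c) = add (mul a b) (lam a c))
    (h : one ∈ sumSet add) : sumSet add = Set.univ :=
  Set.eq_univ_of_forall fun x => mul_one x ▸ mul_mem_sumSet dist x h

end

theorem stmt_4_general (B : Type*)
    (add mul : B → B → B) (one : B) (inv : B → B) (lam : B → B → B)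
    (mul_assoc : ∀ a b c : B, mul (mul a b) c = mul a (mul b c))
    (one_mul : ∀ a : B, mul one a = a) (mul_one : ∀ a : B, mul a one = a)
    (inv_mul : ∀ a : B, mul (inv a) a = one) (mul_inv : ∀ a : B, mul a (inv a) = one)
    (dist : ∀ a b c : B, mul a (add b c) = add (mul a b) (lam a c)) :
    ∀ a ∈ ({x : B | ∃ u v : B, add u v = x}ᶜ ∪ {one} : Set B),
      ∀ b ∈ ({x : B | ∃ u v : B, add u v = x}ᶜ ∪ {one} : Set B),
        mul (inv a) b ∈ ({x : B | ∃ u v : B, add u v = x}ᶜ ∪ {one} : Set B) := by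
  intro a ha b hb
  by_cases h : mul (inv a) b ∈ sumSet add
  · have hb_sum : b ∈ sumSet add := mem_sumSet_of_inv_mul_mem mul_assoc one_mul mul_inv dist h
    have hb_one : b = one := hb.resolve_left (not_not_intro hb_sum)
    have ha_sum : a ∈ sumSet add := by
      rw [sumSet_eq_univ_of_one_mem mul_one dist (hb_one ▸ hb_sum)]
      trivial
    have ha_one : a = one := ha.resolve_left (not_not_intro ha_sum)
    rw [ha_one, hb_one]
    exact Or.inr (inv_mul one)
  · exact Or.inl h

/-- Brace-like left semi-truss: `(B,+)` a semigroup, `(B,∘)` a group with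
identity `one` and inverse `inv`, and `lam : B → B → B` with each `lam a` an
endomorphism of `(B,+)`, `lam` a morphism from `(B,∘)`, and the
brace-like distributive law. -/
theorem stmt_4 (B : Type*)
    (add mul : B → B → B) (one : B) (inv : B → B) (lam : B → B → B)
    (add_assoc : ∀ a b c : B, add (add a b) c = add a (add b c))
    (mul_assoc : ∀ a b c : B, mul (mul a b) c = mul a (mul b c))
    (one_mul : ∀ a : B, mul one a = a) (mul_one : ∀ a : B, mul a one = a)
    (inv_mul : ∀ a : B, mul (inv a) a = one) (mul_inv : ∀ a : B, mul a (inv a) = one)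
    (lam_add : ∀ a x y : B, lam a (add x y) = add (lam a x) (lam a y))
    (lam_mul : ∀ a b x : B, lam (mul a b) x = lam a (lam b x))
    (dist : ∀ a b c : B, mul a (add b c) = add (mul a b) (lam a c)) :
    ∀ a ∈ ({x : B | ∃ u v : B, add u v = x}ᶜ ∪ {one} : Set B),
      ∀ b ∈ ({x : B | ∃ u v : B, add u v = x}ᶜ ∪ {one} : Set B),
        mul (inv a) b ∈ ({x : B | ∃ u v : B, add u v = x}ᶜ ∪ {one} : Set B) :=
  stmt_4_general B add mul one inv lam mul_assoc one_mul mul_one inv_mul mul_inv dist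
end

section
/- Let (B,+,∘,ι) be an almost left semi-brace satisfying condition (C1): (ι(a) + b) ∘ ι(1) = ι(a) + (b ∘ ι(1)) for all a, b ∈ B, and define λ_a(b) := a ∘ (ι(a) + b) and ρ_b(a) := \overline{(ι(a) + b)} ∘ b. Then for all x, y, z ∈ B one has ρ_z(ρ_y(x)) = \overline{(ι(x) + y ∘ (ι(1) + z))} ∘ (y ∘ z). -/
/-!
In an almost left semi-brace, `ι(b) = b̄ ∘ ι(1)`, so with `r = ρ_y(x) = \overline{(ι(x) + y)} ∘ y`
condition (C1) gives `y ∘ ι(r) = ι(x) + y ∘ ι(1)`. The distributive law then turns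
`y ∘ (ι(r) + z)` into `ι(x) + y ∘ (ι(1) + z)`, and `ρ_z(r) = \overline{(ι(r) + z)} ∘ z` is this
element's inverse composed with `y ∘ z`.
-/

namespace AlmostLeftSemiBrace

variable {G : Type*} [Group G] {add : G → G → G} {ι : G → G}

def rho (add : G → G → G) (ι : G → G) (b a : G) : G := (add (ι a) b)⁻¹ * b

theorem iota_eq_inv_mul_iota_one (iota_mul : ∀ a b, ι (a * b) = b⁻¹ * ι a) (b : G) :
    ι b = b⁻¹ * ι 1 := by
  simpa using iota_mul 1 b

theorem mul_iota_rho (iota_mul : ∀ a b, ι (a * b) = b⁻¹ * ι a)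
    (C1 : ∀ a b, add (ι a) b * ι 1 = add (ι a) (b * ι 1)) (x y : G) :
    y * ι (rho add ι y x) = add (ι x) (y * ι 1) := by
  rw [iota_eq_inv_mul_iota_one iota_mul, rho, mul_inv_rev, inv_inv, mul_assoc,
    mul_inv_cancel_left, C1]

theorem mul_add_iota_rho (add_assoc : ∀ a b c, add (add a b) c = add a (add b c))
    (iota_mul : ∀ a b, ι (a * b) = b⁻¹ * ι a)
    (dist : ∀ a b c, a * add b c = add (a * b) (a * add (ι a) c))
    (C1 : ∀ a b, add (ι a) b * ι 1 = add (ι a) (b * ι 1)) (x y z : G) :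
    y * add (ι (rho add ι y x)) z = add (ι x) (y * add (ι 1) z) := by
  rw [dist, mul_iota_rho iota_mul C1, add_assoc, ← dist]

theorem rho_rho (add_assoc : ∀ a b c, add (add a b) c = add a (add b c))
    (iota_mul : ∀ a b, ι (a * b) = b⁻¹ * ι a)
    (dist : ∀ a b c, a * add b c = add (a * b) (a * add (ι a) c))
    (C1 : ∀ a b, add (ι a) b * ι 1 = add (ι a) (b * ι 1)) (x y z : G) :
    rho add ι z (rho add ι y x) = (add (ι x) (y * add (ι 1) z))⁻¹ * (y * z) := by
  rw [← mul_add_iota_rho add_assoc iota_mul dist C1 x y z, rho, mul_inv_rev, mul_assoc,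
    inv_mul_cancel_left]

end AlmostLeftSemiBrace

theorem stmt_16_general (B : Type*)
    (add mul : B → B → B) (one : B) (inv : B → B) (iota : B → B)
    (add_assoc : ∀ a b c : B, add (add a b) c = add a (add b c))
    (mul_assoc : ∀ a b c : B, mul (mul a b) c = mul a (mul b c))
    (one_mul : ∀ a : B, mul one a = a)
    (inv_mul : ∀ a : B, mul (inv a) a = one)
    (iota_mul : ∀ a b : B, iota (mul a b) = mul (inv b) (iota a))
    (dist : ∀ a b c : B, mul a (add b c) = add (mul a b) (mul a (add (iota a) c)))
    (rho : B → B → B) (hrho : ∀ b a : B, rho b a = mul (inv (add (iota a) b)) b)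
    (C1 : ∀ a b : B, mul (add (iota a) b) (iota one) = add (iota a) (mul b (iota one))) :
    ∀ x y z : B,
      rho z (rho y x) =
        mul (inv (add (iota x) (mul y (add (iota one) z)))) (mul y z) := by
  let : Mul B := ⟨mul⟩
  let : Inv B := ⟨inv⟩
  let : One B := ⟨one⟩
  let : Group B := Group.ofLeftAxioms mul_assoc one_mul inv_mul
  have rho_eq : rho = AlmostLeftSemiBrace.rho add iota := funext₂ hrho
  intro x y z
  rw [rho_eq]
  exact AlmostLeftSemiBrace.rho_rho add_assoc iota_mul dist C1 x y z

/-- Almost left semi-brace: `(B,+)` a semigroup, `(B,∘)` a group with identity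
`one` and inverse `inv`, and `iota : B → B` with `ι(a∘b) = b̄ ∘ ι(a)` and
`a ∘ (b + c) = (a ∘ b) + a ∘ (ι(a) + c)`. -/
theorem stmt_16 (B : Type*)
    (add mul : B → B → B) (one : B) (inv : B → B) (iota : B → B)
    (add_assoc : ∀ a b c : B, add (add a b) c = add a (add b c))
    (mul_assoc : ∀ a b c : B, mul (mul a b) c = mul a (mul b c))
    (one_mul : ∀ a : B, mul one a = a) (mul_one : ∀ a : B, mul a one = a)
    (inv_mul : ∀ a : B, mul (inv a) a = one) (mul_inv : ∀ a : B, mul a (inv a) = one)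
    (iota_mul : ∀ a b : B, iota (mul a b) = mul (inv b) (iota a))
    (dist : ∀ a b c : B, mul a (add b c) = add (mul a b) (mul a (add (iota a) c)))
    (lam : B → B → B) (hlam : ∀ a b : B, lam a b = mul a (add (iota a) b))
    (rho : B → B → B) (hrho : ∀ b a : B, rho b a = mul (inv (add (iota a) b)) b)
    (C1 : ∀ a b : B, mul (add (iota a) b) (iota one) = add (iota a) (mul b (iota one))) :
    ∀ x y z : B,
      rho z (rho y x) =
        mul (inv (add (iota x) (mul y (add (iota one) z)))) (mul y z) :=
  stmt_16_general B add mul one inv iota add_assoc mul_assoc one_mul inv_mul iota_mul dist rho hrho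
    C1
end
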